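/- arXiv:math/0305228 — 2 statements merged into one kernel-verified Lean document; each statement's English description precedes it below -/
import Mathlib

section
/- Let C₀ > 0 and let (t_i) be a sequence of positive real numbers with t_i → ∞. For each i let λ₁(i) ≤ λ₂(i) ≤ λ₃(i) be real numbers and set K_i = √(λ₁(i)² + λ₂(i)² + λ₃(i)²). Assume: (a) for every i with λ₁(i) < 0 one has λ₁(i) + λ₂(i) + λ₃(i) ≥ −λ₁(i)·(log(−λ₁(i)) + log(1 + C₀·t_i) − log C₀ − 3); and (b) t_i·K_i → ∞ as i → ∞. Then λ₃(i) > 0 for all sufficiently large i, and min(λ₁(i), 0)/λ₃(i) → 0 as i → ∞. -/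
/-!
Write `a = -λ₁ > 0`. Since `log (1 + C₀ t) - log C₀ ≥ log t`, the pinching estimate gives
`a t ≤ exp (R / a + 3)`. If `λ₁` is not negligible against `λ₃`, i.e. `ε λ₃ < a`, then
`R ≤ 2 λ₃ < 2 a / ε` and all eigenvalues lie in `[-a, a / ε]`, so
`t K ≤ √3 (1 + 1/ε) a t ≤ √3 (1 + 1/ε) exp (2/ε + 3)`.
Hence once `t K` exceeds this threshold, `-λ₁ ≤ ε λ₃`; this also forces `λ₃ > 0`.
-/

open Real Filter

section Pinching

variable {C₀ t x y z : ℝ}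

theorem mul_le_exp_of_pinching {a R : ℝ} (hC₀ : 0 < C₀) (ht : 0 < t) (ha : 0 < a)
    (hR : a * (log a + log (1 + C₀ * t) - log C₀ - 3) ≤ R) :
    a * t ≤ exp (R / a + 3) := by
  have hlog_t : log t ≤ log (1 + C₀ * t) - log C₀ := by
    have : log (C₀ * t) ≤ log (1 + C₀ * t) := log_le_log (by positivity) (by linarith)
    rw [log_mul hC₀.ne' ht.ne'] at this
    linarith
  have hquot : log a + log (1 + C₀ * t) - log C₀ - 3 ≤ R / a := by
    rwa [le_div_iff₀ ha, mul_comm]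
  rw [← log_le_iff_le_exp (by positivity), log_mul ha.ne' ht.ne']
  linarith

theorem sqrt_sum_sq_le_of_sorted {m : ℝ} (hxy : x ≤ y) (hyz : y ≤ z) (hx : -m ≤ x)
    (hz : z ≤ m) : √(x ^ 2 + y ^ 2 + z ^ 2) ≤ √3 * m := by
  have hm : 0 ≤ m := by linarith
  have hsq : x ^ 2 + y ^ 2 + z ^ 2 ≤ 3 * m ^ 2 := by nlinarith
  calc √(x ^ 2 + y ^ 2 + z ^ 2) ≤ √(3 * m ^ 2) := sqrt_le_sqrt hsq
    _ = √3 * m := by rw [sqrt_mul zero_le_three, sqrt_sq hm]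

noncomputable def pinchingThreshold (ε : ℝ) : ℝ :=
  √3 * (1 + 1 / ε) * exp (2 / ε + 3)

theorem pinchingThreshold_pos {ε : ℝ} (hε : 0 < ε) : 0 < pinchingThreshold ε := by
  unfold pinchingThreshold
  positivity

theorem mul_sqrt_sum_sq_le_pinchingThreshold {ε : ℝ} (hC₀ : 0 < C₀) (ht : 0 < t)
    (hxy : x ≤ y) (hyz : y ≤ z) (hx : x < 0)
    (hpinch : x + y + z ≥ -x * (log (-x) + log (1 + C₀ * t) - log C₀ - 3))
    (hε : 0 < ε) (hdom : ε * z < -x) :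
    t * √(x ^ 2 + y ^ 2 + z ^ 2) ≤ pinchingThreshold ε := by
  set a := -x
  have ha : 0 < a := neg_pos.mpr hx
  have hz : z < a / ε := by rw [lt_div_iff₀ hε]; linarith
  have hR : (x + y + z) / a ≤ 2 / ε := by
    rw [div_le_iff₀ ha, div_mul_eq_mul_div, mul_div_assoc]
    linarith
  have hat : a * t ≤ exp (2 / ε + 3) :=
    (mul_le_exp_of_pinching hC₀ ht ha hpinch).trans (exp_le_exp.mpr (by linarith))
  have hm : (1 + 1 / ε) * a = a + a / ε := by ring
  have hK : √(x ^ 2 + y ^ 2 + z ^ 2) ≤ √3 * ((1 + 1 / ε) * a) :=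
    sqrt_sum_sq_le_of_sorted hxy hyz (by linarith [div_pos ha hε]) (by linarith)
  calc t * √(x ^ 2 + y ^ 2 + z ^ 2) ≤ t * (√3 * ((1 + 1 / ε) * a)) := by gcongr
    _ = √3 * (1 + 1 / ε) * (a * t) := by ring
    _ ≤ pinchingThreshold ε := by unfold pinchingThreshold; gcongr

theorem pos_and_neg_le_of_pinchingThreshold_lt {ε : ℝ} (hC₀ : 0 < C₀) (ht : 0 < t)
    (hxy : x ≤ y) (hyz : y ≤ z)
    (hpinch : x < 0 → x + y + z ≥ -x * (log (-x) + log (1 + C₀ * t) - log C₀ - 3))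
    (hε : 0 < ε) (hlarge : pinchingThreshold ε < t * √(x ^ 2 + y ^ 2 + z ^ 2)) :
    0 < z ∧ -(ε * z) ≤ min x 0 := by
  have hdom : x < 0 → -x ≤ ε * z := fun hx => not_lt.mp fun hdom =>
    hlarge.not_ge (mul_sqrt_sum_sq_le_pinchingThreshold hC₀ ht hxy hyz hx (hpinch hx) hε hdom)
  have hz : 0 < z := by
    by_contra! hz
    rcases lt_or_ge x 0 with hx | hx
    · nlinarith [hdom hx]
    · obtain ⟨rfl, rfl, rfl⟩ : x = 0 ∧ y = 0 ∧ z = 0 := ⟨by linarith, by linarith, by linarith⟩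
      have := pinchingThreshold_pos hε
      norm_num at hlarge
      linarith
  refine ⟨hz, ?_⟩
  rcases lt_or_ge x 0 with hx | hx
  · rw [min_eq_left hx.le]; linarith [hdom hx]
  · rw [min_eq_right hx]; exact neg_nonpos.mpr (by positivity)

end Pinching

theorem type_IIb_almost_nonneg_sectional_curvature_general
    (C₀ : ℝ) (hC₀ : 0 < C₀)
    (t : ℕ → ℝ) (ht : ∀ i, 0 < t i)
    (l₁ l₂ l₃ : ℕ → ℝ) (h12 : ∀ i, l₁ i ≤ l₂ i) (h23 : ∀ i, l₂ i ≤ l₃ i)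
    (K : ℕ → ℝ)
    (hK : ∀ i, K i = Real.sqrt ((l₁ i) ^ 2 + (l₂ i) ^ 2 + (l₃ i) ^ 2))
    (ha : ∀ i, l₁ i < 0 → l₁ i + l₂ i + l₃ i ≥
      -l₁ i * (Real.log (-l₁ i) + Real.log (1 + C₀ * t i) - Real.log C₀ - 3))
    (hb : Filter.Tendsto (fun i => t i * K i) Filter.atTop Filter.atTop) :
    (∀ᶠ i in Filter.atTop, 0 < l₃ i) ∧
      Filter.Tendsto (fun i => min (l₁ i) 0 / l₃ i) Filter.atTop (nhds 0) := by
  have hsmall : ∀ ε > 0, ∀ᶠ i in atTop, 0 < l₃ i ∧ -(ε * l₃ i) ≤ min (l₁ i) 0 := by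
    intro ε hε
    filter_upwards [hb.eventually_gt_atTop (pinchingThreshold ε)] with i hi
    rw [hK i] at hi
    exact pos_and_neg_le_of_pinchingThreshold_lt hC₀ (ht i) (h12 i) (h23 i) (ha i) hε hi
  refine ⟨(hsmall 1 one_pos).mono fun i hi => hi.1, Metric.tendsto_nhds.mpr fun ε hε => ?_⟩
  filter_upwards [hsmall (ε / 2) (half_pos hε)] with i ⟨hz, hmin⟩
  have hquot : -(ε / 2) ≤ min (l₁ i) 0 / l₃ i := by rwa [le_div_iff₀ hz, neg_mul]
  have hnonpos : min (l₁ i) 0 / l₃ i ≤ 0 := div_nonpos_of_nonpos_of_nonneg (min_le_right _ _) hz.le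
  rw [Real.dist_0_eq_abs, abs_of_nonpos hnonpos]
  linarith

/-- A Type IIb-like sequence satisfying Hamilton's pinching estimate
has almost nonnegative sectional curvatures. -/
theorem type_IIb_almost_nonneg_sectional_curvature
    (C₀ : ℝ) (hC₀ : 0 < C₀)
    (t : ℕ → ℝ) (ht : ∀ i, 0 < t i)
    (htt : Filter.Tendsto t Filter.atTop Filter.atTop)
    (l₁ l₂ l₃ : ℕ → ℝ) (h12 : ∀ i, l₁ i ≤ l₂ i) (h23 : ∀ i, l₂ i ≤ l₃ i)
    (K : ℕ → ℝ)
    (hK : ∀ i, K i = Real.sqrt ((l₁ i) ^ 2 + (l₂ i) ^ 2 + (l₃ i) ^ 2))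
    (ha : ∀ i, l₁ i < 0 → l₁ i + l₂ i + l₃ i ≥
      -l₁ i * (Real.log (-l₁ i) + Real.log (1 + C₀ * t i) - Real.log C₀ - 3))
    (hb : Filter.Tendsto (fun i => t i * K i) Filter.atTop Filter.atTop) :
    (∀ᶠ i in Filter.atTop, 0 < l₃ i) ∧
      Filter.Tendsto (fun i => min (l₁ i) 0 / l₃ i) Filter.atTop (nhds 0) :=
  type_IIb_almost_nonneg_sectional_curvature_general C₀ hC₀ t ht l₁ l₂ l₃ h12 h23 K hK ha hb
end

section
/- Let C₀ > 0, t ≥ 0, L > 1, and let λ₁ ≤ λ₂ ≤ λ₃ be real numbers with λ₁ < 0. Assume λ₁ + λ₂ + λ₃ ≥ −λ₁·(log(−λ₁) + log(1 + C₀·t) − log C₀ − 3) and −λ₁ > e^{2L+2}·(C₀⁻¹ + t)⁻¹. Then λ₃ ≥ L·(−λ₁). -/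
/-- If `-l₁` exceeds the threshold `e^(2L+2) (C₀⁻¹ + t)⁻¹`, then
the pinching estimate forces `l₃ ≥ L (-l₁)`. -/
theorem pinching_threshold
    (C₀ t L l₁ l₂ l₃ : ℝ) (hC₀ : 0 < C₀) (ht : 0 ≤ t) (hL : 1 < L)
    (h12 : l₁ ≤ l₂) (h23 : l₂ ≤ l₃) (hneg : l₁ < 0)
    (h : l₁ + l₂ + l₃ ≥
      -l₁ * (Real.log (-l₁) + Real.log (1 + C₀ * t) - Real.log C₀ - 3))
    (hthr : -l₁ > Real.exp (2 * L + 2) * (C₀⁻¹ + t)⁻¹) :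
    l₃ ≥ L * (-l₁) := by
  set a : ℝ := -l₁ with ha_def
  have ha : 0 < a := by simp [ha_def]; linarith
  have h1t : 0 < 1 + C₀ * t := by positivity
  have hinv : 0 < C₀⁻¹ + t := by positivity
  have hkey : (C₀⁻¹ + t)⁻¹ = C₀ / (1 + C₀ * t) := by
    rw [eq_div_iff (ne_of_gt h1t), inv_mul_eq_div, div_eq_iff (ne_of_gt hinv)]
    field_simp
  have hlog : Real.log a > (2 * L + 2) + Real.log C₀ - Real.log (1 + C₀ * t) := by
    have h2 : Real.exp (2 * L + 2) * (C₀⁻¹ + t)⁻¹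
        = Real.exp ((2 * L + 2) + Real.log C₀ - Real.log (1 + C₀ * t)) := by
      rw [hkey, Real.exp_sub, Real.exp_add, Real.exp_log h1t, Real.exp_add,
        Real.exp_log hC₀, Real.exp_add]
      ring
    have h3 : Real.exp ((2 * L + 2) + Real.log C₀ - Real.log (1 + C₀ * t)) < a := by
      rw [← h2]; exact hthr
    calc (2 * L + 2) + Real.log C₀ - Real.log (1 + C₀ * t)
        = Real.log (Real.exp ((2 * L + 2) + Real.log C₀ - Real.log (1 + C₀ * t))) := by
          rw [Real.log_exp]
      _ < Real.log a := Real.log_lt_log (Real.exp_pos _) h3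
  have hfac : Real.log a + Real.log (1 + C₀ * t) - Real.log C₀ - 3 ≥ 2 * L - 1 := by
    linarith
  have hmul : a * (Real.log a + Real.log (1 + C₀ * t) - Real.log C₀ - 3)
      ≥ a * (2 * L - 1) := by
    exact mul_le_mul_of_nonneg_left hfac ha.le
  have hsum : l₂ + l₃ ≥ 2 * L * a := by
    have : l₁ + l₂ + l₃ ≥ a * (2 * L - 1) := le_trans hmul h
    have hl1 : l₁ = -a := by simp [ha_def]
    nlinarith
  have : 2 * l₃ ≥ l₂ + l₃ := by linarith
  nlinarith
end
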